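/- arXiv:1204.5448 — 3 statements merged into one kernel-verified Lean document; each statement's English description precedes it below -/
import Mathlib

section
/- Let Δ be a 0-normalized Γ_{m,n}-semimodule, M = max(ℤ∖Δ), and Δ̂ = {M − y : y ∈ ℤ, y ∉ Δ}. Then: (i) for every n-generator a of Δ, #([a, a+m) ∖ Δ) = #{b : b is an m-generator of Δ̂ and a + b < M}; and (ii) for every m-generator b of Δ̂, #([b, b+n) ∖ Δ̂) = #{a : a is an n-generator of Δ and a + b < M}. (These two identities express that the Young diagram G_n(Δ), whose columns are the numbers #([a, a+m) ∖ Δ) over n-generators a of Δ, is the transpose of the Young diagram G_m(Δ̂), whose columns are the numbers #([b, b+n) ∖ Δ̂) over m-generators b of Δ̂.) -/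
/-!
Let `S ⊆ ℤ` be closed under `+ d` with `ℤ ∖ S` bounded above. Every residue class mod `d` that
meets `ℤ ∖ S` contains exactly one `t` with `t ∉ S`, `t + d ∈ S`, namely its largest gap. For
`a ∈ S`, reducing these `t` into `[a, a + d)` is therefore a bijection from those with `t > a`
onto the gaps of `S` in `[a, a + d)`. The reflection `t ↦ M - t` carries them onto the
`d`-generators `b` of `hatSet S M` with `a + b < M`, which gives (i); as `hatSet · M` is an
involution, the same count for `Δ̂` gives (ii).
-/

/-- The numerical semigroup generated by `m` and `n`, viewed as a subset of `ℤ`. -/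
def Gamma (m n : ℕ) : Set ℤ := {x : ℤ | ∃ u v : ℕ, x = u * m + v * n}

/-- A 0-normalized `Γ_{m,n}`-semimodule: a subset of `ℤ≥0` containing `0` and
closed under adding `m` and `n`. -/
def IsSemimodule (m n : ℕ) (Δ : Set ℤ) : Prop :=
  (∀ x ∈ Δ, 0 ≤ x) ∧ (0 : ℤ) ∈ Δ ∧ (∀ x ∈ Δ, x + m ∈ Δ) ∧ (∀ x ∈ Δ, x + n ∈ Δ)

/-- The dual (hatted) semimodule `Δ̂ = M - (ℤ ∖ Δ)`, where `M = max(ℤ ∖ Δ)`. -/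
def hatSet (Δ : Set ℤ) (M : ℤ) : Set ℤ := {z : ℤ | ∃ y : ℤ, y ∉ Δ ∧ z = M - y}

open Set

section AddClosed

variable {S : Set ℤ} {d : ℤ}

lemma add_mul_mem_of_add_mem (hS : ∀ x ∈ S, x + d ∈ S) {x : ℤ} (hx : x ∈ S) {k : ℤ}
    (hk : 0 ≤ k) : x + d * k ∈ S := by
  lift k to ℕ using hk
  induction k with
  | zero => simpa using hx
  | succ k ih => simpa [mul_add, ← add_assoc] using hS _ ih

lemma lt_of_modEq_of_mem_of_notMem (hd : 0 < d) (hS : ∀ x ∈ S, x + d ∈ S) {x y : ℤ}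
    (hx : x ∈ S) (hy : y ∉ S) (hxy : x ≡ y [ZMOD d]) : y < x := by
  by_contra! hle
  obtain ⟨k, hk⟩ := Int.modEq_iff_add_fac.1 hxy
  have hk0 : 0 ≤ k := by nlinarith
  exact hy (hk ▸ add_mul_mem_of_add_mem hS hx hk0)

lemma eq_of_modEq_of_notMem_of_add_mem (hd : 0 < d) (hS : ∀ x ∈ S, x + d ∈ S) {t t' : ℤ}
    (ht : t ∉ S ∧ t + d ∈ S) (ht' : t' ∉ S ∧ t' + d ∈ S) (h : t ≡ t' [ZMOD d]) : t = t' := by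
  have h₁ := lt_of_modEq_of_mem_of_notMem hd hS ht.2 ht'.1 (Int.add_modulus_modEq_iff.2 h)
  have h₂ := lt_of_modEq_of_mem_of_notMem hd hS ht'.2 ht.1 (Int.add_modulus_modEq_iff.2 h.symm)
  have := Int.eq_zero_of_abs_lt_dvd h.dvd (abs_sub_lt_iff.2 ⟨by linarith, by linarith⟩)
  linarith

lemma exists_modEq_notMem_add_mem (hd : 0 < d) (hbdd : BddAbove Sᶜ) {y : ℤ} (hy : y ∉ S) :
    ∃ t, (t ∉ S ∧ t + d ∈ S) ∧ y ≡ t [ZMOD d] ∧ y ≤ t := by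
  obtain ⟨t, ⟨htS, hyt⟩, htmax⟩ := BddAbove.exists_isGreatest_of_nonempty
    (hbdd.mono fun x (hx : x ∉ S ∧ y ≡ x [ZMOD d]) => hx.1) ⟨y, hy, Int.ModEq.rfl⟩
  refine ⟨t, ⟨htS, ?_⟩, hyt, htmax ⟨hy, Int.ModEq.rfl⟩⟩
  by_contra h
  have := htmax ⟨h, Int.modEq_add_modulus_iff.2 hyt⟩
  linarith

lemma ncard_Ico_diff_eq_ncard_notMem_add_mem (hd : 0 < d) (hS : ∀ x ∈ S, x + d ∈ S)
    (hbdd : BddAbove Sᶜ) {a : ℤ} (ha : a ∈ S) :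
    (Ico a (a + d) \ S).ncard = {t | (t ∉ S ∧ t + d ∈ S) ∧ a < t}.ncard := by
  have hmod : ∀ t, toIcoMod hd a t ≡ t [ZMOD d] := fun t => by
    rw [← AddCommGroup.modEq_iff_intModEq, ← toIcoMod_inj hd (c := a), toIcoMod_toIcoMod]
  have hbij : BijOn (toIcoMod hd a) {t | (t ∉ S ∧ t + d ∈ S) ∧ a < t} (Ico a (a + d) \ S) := by
    refine ⟨fun t ht => ⟨toIcoMod_mem_Ico hd a t, fun hS' => ?_⟩, fun t ht t' ht' h => ?_,
      fun y hy => ?_⟩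
    · have hlt := lt_of_modEq_of_mem_of_notMem hd hS hS' ht.1.1 (hmod t)
      exact hlt.ne' ((toIcoMod_eq_self hd).2 ⟨ht.2.le, hlt.trans (toIcoMod_lt_right hd a t)⟩)
    · exact eq_of_modEq_of_notMem_of_add_mem hd hS ht.1 ht'.1 ((hmod t).symm.trans (h ▸ hmod t'))
    · obtain ⟨⟨hay, hya⟩, hyS⟩ := hy
      obtain ⟨t, ht, hyt, hle⟩ := exists_modEq_notMem_add_mem hd hbdd hyS
      refine ⟨t, ⟨ht, (lt_of_le_of_ne hay (by rintro rfl; exact hyS ha)).trans_le hle⟩, ?_⟩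
      rw [← (toIcoMod_eq_self hd).2 ⟨hay, hya⟩, toIcoMod_inj, AddCommGroup.modEq_iff_intModEq]
      exact hyt.symm
  exact hbij.ncard_eq.symm

end AddClosed

section Hat

variable {S : Set ℤ} {M d : ℤ}

lemma mem_hatSet_iff {b : ℤ} : b ∈ hatSet S M ↔ M - b ∉ S :=
  ⟨by rintro ⟨y, hy, rfl⟩; simpa using hy, fun h => ⟨M - b, h, by ring⟩⟩

lemma hatSet_hatSet : hatSet (hatSet S M) M = S := by
  ext z
  simp [mem_hatSet_iff]

lemma add_mem_hatSet (hS : ∀ x ∈ S, x + d ∈ S) : ∀ z ∈ hatSet S M, z + d ∈ hatSet S M := by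
  intro z hz
  rw [mem_hatSet_iff] at hz ⊢
  exact fun h => hz (by simpa [sub_add] using hS _ h)

lemma bddAbove_compl_hatSet (hS : BddBelow S) : BddAbove (hatSet S M)ᶜ := by
  obtain ⟨c, hc⟩ := hS
  refine ⟨M - c, fun z hz => ?_⟩
  rw [mem_compl_iff, mem_hatSet_iff, not_not] at hz
  linarith [hc hz]

lemma image_sub_setOf_notMem_add_mem (a : ℤ) :
    (M - ·) '' {t | (t ∉ S ∧ t + d ∈ S) ∧ a < t} =
      {b | (b ∈ hatSet S M ∧ b - d ∉ hatSet S M) ∧ a + b < M} := by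
  rw [image_eq_preimage_of_inverse (fun t => sub_sub_cancel M t) (fun t => sub_sub_cancel M t)]
  ext b
  simp [mem_hatSet_iff, sub_add, lt_sub_iff_add_lt]

end Hat

theorem ncard_Ico_diff_eq_ncard_hatSet_generators {S : Set ℤ} {d : ℤ} (hd : 0 < d)
    (hS : ∀ x ∈ S, x + d ∈ S) (hbdd : BddAbove Sᶜ) {a : ℤ} (ha : a ∈ S) (M : ℤ) :
    (Ico a (a + d) \ S).ncard =
      {b | (b ∈ hatSet S M ∧ b - d ∉ hatSet S M) ∧ a + b < M}.ncard := by
  rw [ncard_Ico_diff_eq_ncard_notMem_add_mem hd hS hbdd ha, ← image_sub_setOf_notMem_add_mem,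
    ncard_image_of_injective _ sub_right_injective]

theorem Gn_transpose_Gm_hat_general (m n : ℕ) (hm : 0 < m) (hn : 0 < n)
    (Δ : Set ℤ) (hΔ : IsSemimodule m n Δ)
    (M : ℤ) (hM : IsGreatest Δᶜ M) :
    (∀ a : ℤ, a ∈ Δ → a - n ∉ Δ →
      ({y : ℤ | a ≤ y ∧ y < a + m} \ Δ).ncard =
        {b : ℤ | (b ∈ hatSet Δ M ∧ b - m ∉ hatSet Δ M) ∧ a + b < M}.ncard) ∧
    (∀ b : ℤ, b ∈ hatSet Δ M → b - m ∉ hatSet Δ M →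
      ({y : ℤ | b ≤ y ∧ y < b + n} \ hatSet Δ M).ncard =
        {a : ℤ | (a ∈ Δ ∧ a - n ∉ Δ) ∧ a + b < M}.ncard) := by
  obtain ⟨hnonneg, -, hm_add, hn_add⟩ := hΔ
  refine ⟨fun a ha _ => ?_, fun b hb _ => ?_⟩
  · exact ncard_Ico_diff_eq_ncard_hatSet_generators (by exact_mod_cast hm) hm_add hM.bddAbove ha M
  · simpa only [hatSet_hatSet, add_comm b, ← Ico_def] using
      ncard_Ico_diff_eq_ncard_hatSet_generators (by exact_mod_cast hn) (add_mem_hatSet hn_add)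
        (bddAbove_compl_hatSet ⟨0, hnonneg⟩) hb M

/-- **`G_n(Δ)` is the transpose of `G_m(Δ̂)`.**
(i) For every `n`-generator `a` of `Δ`, the number of gaps of `Δ` in `[a, a+m)` equals
the number of `m`-generators `b` of `Δ̂` with `a + b < M`; (ii) for every `m`-generator
`b` of `Δ̂`, the number of gaps of `Δ̂` in `[b, b+n)` equals the number of
`n`-generators `a` of `Δ` with `a + b < M`. -/
theorem Gn_transpose_Gm_hat (m n : ℕ) (hm : 0 < m) (hn : 0 < n)
    (hmn : Nat.Coprime m n) (Δ : Set ℤ) (hΔ : IsSemimodule m n Δ)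
    (M : ℤ) (hM : IsGreatest Δᶜ M) :
    (∀ a : ℤ, a ∈ Δ → a - n ∉ Δ →
      ({y : ℤ | a ≤ y ∧ y < a + m} \ Δ).ncard =
        {b : ℤ | (b ∈ hatSet Δ M ∧ b - m ∉ hatSet Δ M) ∧ a + b < M}.ncard) ∧
    (∀ b : ℤ, b ∈ hatSet Δ M → b - m ∉ hatSet Δ M →
      ({y : ℤ | b ≤ y ∧ y < b + n} \ hatSet Δ M).ncard =
        {a : ℤ | (a ∈ Δ ∧ a - n ∉ Δ) ∧ a + b < M}.ncard) :=
  Gn_transpose_Gm_hat_general m n hm hn Δ hΔ M hM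
end

section
/- Let n and k be positive integers, m = kn + 1, and let Δ be a 0-normalized Γ_{m,n}-semimodule. If a is a (kn+1)-generator of Δ (a ∈ Δ, a − (kn+1) ∉ Δ), then for every integer l ≥ 1 the interval [a − l(kn+1), a − lkn − 1] has empty intersection with Δ. -/
/-! Writing `y = a - l(kn+1) + j` with `0 ≤ j < l`, the element
`a - (kn+1) = y + (l-1-j)(kn+1) + jk·n` is obtained from `y` by adding an element of `Γ_{kn+1,n}`;
so `y ∈ Δ` would force `a - (kn+1) ∈ Δ`. -/

theorem IsSemimodule.add_mem {m n : ℕ} {Δ : Set ℤ} (hΔ : IsSemimodule m n Δ) {x g : ℤ}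
    (hx : x ∈ Δ) (hg : g ∈ Gamma m n) : x + g ∈ Δ := by
  obtain ⟨-, -, hm, hn⟩ := hΔ
  obtain ⟨u, v, rfl⟩ := hg
  induction u generalizing x with
  | zero =>
    induction v generalizing x with
    | zero => simpa using hx
    | succ v ih => simpa [add_mul, ← add_assoc] using hn _ (ih hx)
  | succ u ih => simpa [add_mul, add_right_comm _ _ (v * (n : ℤ)), ← add_assoc] using hm _ (ih hx)

theorem mul_sub_sub_mem_Gamma (n k : ℕ) {j l : ℕ} (hjl : j < l) :
    (l : ℤ) * (k * n + 1) - (k * n + 1) - j ∈ Gamma (k * n + 1) n := by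
  obtain ⟨r, rfl⟩ := Nat.exists_eq_add_of_lt hjl
  exact ⟨r, j * k, by push_cast; ring⟩

theorem gaps_knp1_general (n k : ℕ)
    (Δ : Set ℤ) (hΔ : IsSemimodule (k * n + 1) n Δ)
    (a : ℤ) (ha' : a - (k * n + 1) ∉ Δ)
    (l : ℕ) (y : ℤ)
    (hy₁ : a - l * (k * n + 1) ≤ y) (hy₂ : y ≤ a - l * (k * n) - 1) :
    y ∉ Δ := by
  intro hy
  obtain ⟨j, hj⟩ : ∃ j : ℕ, y = a - l * (k * n + 1) + j :=
    ⟨(y - (a - l * (k * n + 1))).toNat, by omega⟩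
  have hjl : j < l := by
    have : (j : ℤ) < l := by linarith
    exact_mod_cast this
  have hsum := hΔ.add_mem hy (mul_sub_sub_mem_Gamma n k hjl)
  exact ha' (by convert hsum using 1; rw [hj]; ring)

/-- For `m = kn+1`: if `a` is a `(kn+1)`-generator of `Δ`, then for every `l ≥ 1` the
interval `[a - l(kn+1), a - lkn - 1]` is disjoint from `Δ`. -/
theorem gaps_knp1 (n k : ℕ) (hn : 0 < n) (hk : 0 < k)
    (Δ : Set ℤ) (hΔ : IsSemimodule (k * n + 1) n Δ)
    (a : ℤ) (ha : a ∈ Δ) (ha' : a - (k * n + 1) ∉ Δ)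
    (l : ℕ) (hl : 1 ≤ l) (y : ℤ)
    (hy₁ : a - l * (k * n + 1) ≤ y) (hy₂ : y ≤ a - l * (k * n) - 1) :
    y ∉ Δ :=
  gaps_knp1_general n k Δ hΔ a ha' l y hy₁ hy₂
end

section
/- Let m and n be coprime positive integers with n ≤ 3, and set δ = (m−1)(n−1)/2. Then for all (a, b) ∈ ℕ×ℕ, the number of Young diagrams D below the diagonal of the m×n rectangle with δ − |D| = a and h₊(D) = b equals the number of such diagrams with δ − |D| = b and h₊(D) = a. (This is the symmetry c_{m,n}(q,t) = c_{m,n}(t,q) when min(m,n) ≤ 3.) -/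
/-!
Below the diagonal of an `m × n` rectangle with `n ≤ 3` a Young diagram has at most two rows,
of lengths `q ≤ p`, and `h₊` is an explicit piecewise-linear function of `p` and `q`. The
bidegree `(δ - |D|, h₊(D))` is injective on these diagrams, and its image is symmetric under
swapping the coordinates: for `n ≤ 2` it is the segment `a + b = δ`, and for `n = 3` (so `3 ∤ m`
and `δ = m - 1`) it is the set of lattice points of the triangle `a + b ≤ δ`, `δ ≤ 2a + b`,
`δ ≤ a + 2b`. Hence every fibre of the bidegree has at most one element, and the `(a, b)`-fibre is
nonempty exactly when the `(b, a)`-fibre is.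
-/

/-- A Young diagram as a downward-closed finite set of cells `(x, y)` (column, row). -/
def IsYoung (D : Finset (ℕ × ℕ)) : Prop :=
  ∀ x y x' y', (x, y) ∈ D → x' ≤ x → y' ≤ y → (x', y') ∈ D

/-- `D` lies below the diagonal of the `m × n` rectangle. -/
def BelowDiag (m n : ℕ) (D : Finset (ℕ × ℕ)) : Prop :=
  ∀ c ∈ D, n * (c.1 + 1) + m * (c.2 + 1) < m * n

/-- Arm length of the cell `c` in `D`. -/
def arm (D : Finset (ℕ × ℕ)) (c : ℕ × ℕ) : ℕ :=
  (D.filter (fun c' => c'.2 = c.2 ∧ c.1 < c'.1)).card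

/-- Leg length of the cell `c` in `D`. -/
def leg (D : Finset (ℕ × ℕ)) (c : ℕ × ℕ) : ℕ :=
  (D.filter (fun c' => c'.1 = c.1 ∧ c.2 < c'.2)).card

/-- The statistic `h₊`: the number of cells `c ∈ D` with
`n·a(c) ≤ m·(l(c)+1)` and `m·l(c) < n·(a(c)+1)`. -/
def hplus (m n : ℕ) (D : Finset (ℕ × ℕ)) : ℕ :=
  (D.filter (fun c =>
    n * arm D c ≤ m * (leg D c + 1) ∧ m * leg D c < n * (arm D c + 1))).card

open Finset

lemma card_fiber_eq_of_bijOn {α β : Type*} {f : α → β} {s : Set α} {t : Set β}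
    (hf : Set.BijOn f s t) {u v : β} (huv : u ∈ t ↔ v ∈ t) :
    Nat.card {x | x ∈ s ∧ f x = u} = Nat.card {x | x ∈ s ∧ f x = v} := by
  classical
  have hcard : ∀ w, Nat.card {x | x ∈ s ∧ f x = w} = if w ∈ t then 1 else 0 := by
    intro w
    split_ifs with hw
    · obtain ⟨x, hx, rfl⟩ := hf.surjOn hw
      exact Nat.card_eq_one_iff_exists.2
        ⟨⟨x, hx, rfl⟩, fun y => Subtype.ext (hf.injOn y.2.1 hx y.2.2)⟩
    · exact Nat.card_eq_zero.2 <| Or.inl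
        ⟨fun x => hw (x.2.2 ▸ hf.mapsTo x.2.1)⟩
  rw [hcard, hcard, if_congr huv rfl rfl]

def twoRow (p q : ℕ) : Finset (ℕ × ℕ) :=
  range p ×ˢ {0} ∪ range q ×ˢ {1}

lemma mem_twoRow {p q : ℕ} {c : ℕ × ℕ} :
    c ∈ twoRow p q ↔ c.1 < p ∧ c.2 = 0 ∨ c.1 < q ∧ c.2 = 1 := by
  simp only [twoRow, mem_union, mem_product, mem_range, mem_singleton]

lemma card_twoRow (p q : ℕ) : #(twoRow p q) = p + q := by
  rw [twoRow, card_union_of_disjoint (disjoint_product.2 (Or.inr (by simp))),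
    card_product, card_product, card_range, card_range, card_singleton, card_singleton,
    mul_one, mul_one]

lemma isYoung_twoRow {p q : ℕ} (h : q ≤ p) : IsYoung (twoRow p q) := by
  intro x y x' y'
  simp only [mem_twoRow]
  omega

lemma arm_twoRow_zero (p q x : ℕ) : arm (twoRow p q) (x, 0) = p - (x + 1) := by
  have : (twoRow p q).filter (fun c => c.2 = 0 ∧ x < c.1) = Ioo x p ×ˢ {0} := by
    ext ⟨u, v⟩
    simp only [mem_filter, mem_twoRow, mem_product, mem_Ioo, mem_singleton]
    omega
  rw [arm, this, card_product, Nat.card_Ioo, card_singleton, mul_one]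
  omega

lemma arm_twoRow_one (p q x : ℕ) : arm (twoRow p q) (x, 1) = q - (x + 1) := by
  have : (twoRow p q).filter (fun c => c.2 = 1 ∧ x < c.1) = Ioo x q ×ˢ {1} := by
    ext ⟨u, v⟩
    simp only [mem_filter, mem_twoRow, mem_product, mem_Ioo, mem_singleton]
    omega
  rw [arm, this, card_product, Nat.card_Ioo, card_singleton, mul_one]
  omega

lemma leg_twoRow_zero (p q x : ℕ) : leg (twoRow p q) (x, 0) = if x < q then 1 else 0 := by
  split_ifs with hx
  · rw [leg, card_eq_one]
    refine ⟨(x, 1), ?_⟩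
    ext ⟨u, v⟩
    simp only [mem_filter, mem_twoRow, mem_singleton, Prod.mk.injEq]
    omega
  · rw [leg, card_eq_zero, filter_eq_empty_iff]
    rintro ⟨u, v⟩
    simp only [mem_twoRow]
    omega

lemma leg_twoRow_one (p q x : ℕ) : leg (twoRow p q) (x, 1) = 0 := by
  rw [leg, card_eq_zero, filter_eq_empty_iff]
  rintro ⟨u, v⟩
  simp only [mem_twoRow]
  omega

abbrev HPlusCond (m n a l : ℕ) : Prop :=
  n * a ≤ m * (l + 1) ∧ m * l < n * (a + 1)

lemma hplus_twoRow (m n p q : ℕ) :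
    hplus m n (twoRow p q) =
      #{x ∈ range p | HPlusCond m n (p - (x + 1)) (if x < q then 1 else 0)} +
        #{x ∈ range q | HPlusCond m n (q - (x + 1)) 0} := by
  rw [hplus]
  conv_lhs => enter [1, 2]; rw [twoRow]
  rw [filter_union, card_union_of_disjoint
      (disjoint_filter_filter (disjoint_product.2 (Or.inr (by simp)))),
    product_singleton, product_singleton, filter_map, filter_map, card_map, card_map]
  congr 2 <;> ext x <;>
    simp [HPlusCond, arm_twoRow_zero, arm_twoRow_one, leg_twoRow_zero, leg_twoRow_one]

lemma IsYoung.exists_row_iff_lt {D : Finset (ℕ × ℕ)} (hD : IsYoung D) (y : ℕ) :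
    ∃ r, ∀ x, (x, y) ∈ D ↔ x < r := by
  classical
  have hex : ∃ x, (x, y) ∉ D := by
    obtain ⟨x, hx⟩ := Infinite.exists_notMem_finset (D.image Prod.fst)
    exact ⟨x, fun h => hx (mem_image_of_mem _ h)⟩
  refine ⟨Nat.find hex, fun x => ⟨fun hx => ?_, fun hx => not_not.1 (Nat.find_min hex hx)⟩⟩
  by_contra! hle
  exact Nat.find_spec hex (hD _ _ _ _ hx hle le_rfl)

lemma IsYoung.exists_twoRow_eq {D : Finset (ℕ × ℕ)} (hD : IsYoung D) (h : ∀ c ∈ D, c.2 ≤ 1) :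
    ∃ p q, q ≤ p ∧ twoRow p q = D := by
  obtain ⟨p, hp⟩ := hD.exists_row_iff_lt 0
  obtain ⟨q, hq⟩ := hD.exists_row_iff_lt 1
  refine ⟨p, q, ?_, ?_⟩
  · by_contra! hpq
    exact lt_irrefl p ((hp p).1 (hD _ _ _ _ ((hq p).2 hpq) le_rfl zero_le_one))
  · ext ⟨x, y⟩
    rw [mem_twoRow]
    constructor
    · rintro (⟨hx, rfl⟩ | ⟨hx, rfl⟩)
      exacts [(hp x).2 hx, (hq x).2 hx]
    · intro hc
      obtain rfl | rfl : y = 0 ∨ y = 1 := by have := h _ hc; omega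
      exacts [Or.inl ⟨(hp x).1 hc, rfl⟩, Or.inr ⟨(hq x).1 hc, rfl⟩]

lemma BelowDiag.snd_add_one_lt {m n : ℕ} {D : Finset (ℕ × ℕ)} (h : BelowDiag m n D)
    {c : ℕ × ℕ} (hc : c ∈ D) : c.2 + 1 < n := by
  have := h c hc
  exact Nat.lt_of_mul_lt_mul_left (a := m) (by omega)

lemma belowDiag_twoRow_iff {m n p q : ℕ} :
    BelowDiag m n (twoRow p q) ↔
      (0 < p → n * p + m < m * n) ∧ (0 < q → n * q + 2 * m < m * n) := by
  constructor
  · intro h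
    refine ⟨fun hp => ?_, fun hq => ?_⟩
    · have := h (p - 1, 0) (mem_twoRow.2 (by omega))
      rwa [Nat.sub_add_cancel hp, zero_add, mul_one] at this
    · have := h (q - 1, 1) (mem_twoRow.2 (by omega))
      rwa [Nat.sub_add_cancel hq, mul_comm m 2] at this
  · rintro ⟨hp, hq⟩ ⟨x, y⟩ hc
    rcases mem_twoRow.1 hc with ⟨hx, rfl⟩ | ⟨hx, rfl⟩
    · dsimp only at hx ⊢
      have := Nat.mul_le_mul_left n (show x + 1 ≤ p by omega)
      have := hp (by omega)
      omega
    · dsimp only at hx ⊢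
      have := Nat.mul_le_mul_left n (show x + 1 ≤ q by omega)
      have := hq (by omega)
      omega

def youngBelowDiag (m n : ℕ) : Set (Finset (ℕ × ℕ)) :=
  {D | IsYoung D ∧ BelowDiag m n D}

lemma mem_youngBelowDiag_iff {m n : ℕ} (hn : n ≤ 3) {D : Finset (ℕ × ℕ)} :
    D ∈ youngBelowDiag m n ↔ ∃ p q, q ≤ p ∧ (0 < p → n * p + m < m * n) ∧
      (0 < q → n * q + 2 * m < m * n) ∧ twoRow p q = D := by
  constructor
  · rintro ⟨hY, hB⟩
    obtain ⟨p, q, hqp, rfl⟩ :=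
      hY.exists_twoRow_eq fun c hc => by have := hB.snd_add_one_lt hc; omega
    exact ⟨p, q, hqp, belowDiag_twoRow_iff.1 hB |>.1, belowDiag_twoRow_iff.1 hB |>.2, rfl⟩
  · rintro ⟨p, q, hqp, hp, hq, rfl⟩
    exact ⟨isYoung_twoRow hqp, belowDiag_twoRow_iff.2 ⟨hp, hq⟩⟩

/-- The exponents of `q` and `t` in the monomial contributed by `D` to `c_{m,n}(q,t)`. -/
def bidegree (m n : ℕ) (D : Finset (ℕ × ℕ)) : ℕ × ℕ :=
  ((m - 1) * (n - 1) / 2 - #D, hplus m n D)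

lemma mem_youngBelowDiag_of_le_two_iff {m n : ℕ} (hn : n ≤ 2) {D : Finset (ℕ × ℕ)} :
    D ∈ youngBelowDiag m n ↔ ∃ p ≤ (m - 1) * (n - 1) / 2, twoRow p 0 = D := by
  rw [mem_youngBelowDiag_iff (by omega)]
  constructor
  · rintro ⟨p, q, hqp, hp, hq, rfl⟩
    obtain rfl : q = 0 := by interval_cases n <;> omega
    exact ⟨p, by interval_cases n <;> omega, rfl⟩
  · rintro ⟨p, hp, rfl⟩
    exact ⟨p, 0, p.zero_le, by interval_cases n <;> omega, by omega, rfl⟩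

lemma bidegree_twoRow_of_le_two {m n p : ℕ} (hn : n ≤ 2) (hp : p ≤ (m - 1) * (n - 1) / 2) :
    bidegree m n (twoRow p 0) = ((m - 1) * (n - 1) / 2 - p, p) := by
  rw [bidegree, card_twoRow, add_zero, hplus_twoRow, range_zero, filter_empty, card_empty,
    add_zero, filter_true_of_mem, card_range]
  intro x hx
  rw [mem_range] at hx
  interval_cases n <;> norm_num [HPlusCond] at hp ⊢ <;> omega

lemma bijOn_bidegree_of_le_two {m n : ℕ} (hn : n ≤ 2) :
    Set.BijOn (bidegree m n) (youngBelowDiag m n) {d | d.1 + d.2 = (m - 1) * (n - 1) / 2} := by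
  refine ⟨?_, ?_, ?_⟩
  · rintro _ hD
    obtain ⟨p, hp, rfl⟩ := (mem_youngBelowDiag_of_le_two_iff hn).1 hD
    simp only [Set.mem_ofPred_eq, bidegree_twoRow_of_le_two hn hp]
    omega
  · rintro _ hD _ hD' h
    obtain ⟨p, hp, rfl⟩ := (mem_youngBelowDiag_of_le_two_iff hn).1 hD
    obtain ⟨p', hp', rfl⟩ := (mem_youngBelowDiag_of_le_two_iff hn).1 hD'
    rw [bidegree_twoRow_of_le_two hn hp, bidegree_twoRow_of_le_two hn hp', Prod.mk.injEq] at h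
    rw [h.2]
  · rintro ⟨a, b⟩ (hab : a + b = _)
    refine ⟨twoRow b 0, (mem_youngBelowDiag_of_le_two_iff hn).2 ⟨b, by omega, rfl⟩, ?_⟩
    rw [bidegree_twoRow_of_le_two hn (by omega), ← hab, Nat.add_sub_cancel]

lemma mem_youngBelowDiag_three_iff {m : ℕ} (hm : 0 < m) {D : Finset (ℕ × ℕ)} :
    D ∈ youngBelowDiag m 3 ↔
      ∃ p q, q ≤ p ∧ 3 * p < 2 * m ∧ 3 * q < m ∧ twoRow p q = D := by
  rw [mem_youngBelowDiag_iff le_rfl]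
  constructor
  · rintro ⟨p, q, hqp, hp, hq, rfl⟩
    exact ⟨p, q, hqp, by omega, by omega, rfl⟩
  · rintro ⟨p, q, hqp, hp, hq, rfl⟩
    exact ⟨p, q, hqp, by omega, by omega, rfl⟩

lemma hplus_twoRow_three {m p q : ℕ} (hqp : q ≤ p) (hp : 3 * p < 2 * m) (hq : 3 * q < m) :
    hplus m 3 (twoRow p q) = q + min (p - q) (m / 3 + 1) + min q (p - m / 3) := by
  -- A row-`0` cell counts iff its arm is `≥ m / 3` when it lies under row `1`, and `≤ m / 3`
  -- otherwise.
  have hrow₀ : {x ∈ range p | HPlusCond m 3 (p - (x + 1)) (if x < q then 1 else 0)} =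
      range (min q (p - m / 3)) ∪ Ico (max q (p - (m / 3 + 1))) p := by
    ext x
    simp only [HPlusCond, mem_filter, mem_range, mem_union, mem_Ico]
    split_ifs <;> omega
  have hrow₁ : {x ∈ range q | HPlusCond m 3 (q - (x + 1)) 0} = range q :=
    filter_true_of_mem fun x hx => by simp only [HPlusCond, mem_range] at hx ⊢; omega
  rw [hplus_twoRow, hrow₀, hrow₁, card_union_of_disjoint, card_range, card_range, Nat.card_Ico]
  · omega
  · exact disjoint_left.2 fun x hx hx' => by simp only [mem_range, mem_Ico] at hx hx'; omega

lemma bidegree_twoRow_three {m p q : ℕ} (hqp : q ≤ p) (hp : 3 * p < 2 * m) (hq : 3 * q < m) :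
    bidegree m 3 (twoRow p q) =
      (m - 1 - (p + q), q + min (p - q) (m / 3 + 1) + min q (p - m / 3)) := by
  rw [bidegree, card_twoRow, hplus_twoRow_three hqp hp hq]
  congr 1
  omega

lemma exists_rowLengths_of_triangle {m a b : ℕ} (hm : ¬ 3 ∣ m) (hab : a + b ≤ m - 1)
    (ha : m - 1 ≤ 2 * a + b) (hb : m - 1 ≤ a + 2 * b) :
    ∃ p q, q ≤ p ∧ 3 * p < 2 * m ∧ 3 * q < m ∧ m - 1 - (p + q) = a ∧
      q + min (p - q) (m / 3 + 1) + min q (p - m / 3) = b := by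
  -- For `p ≤ m / 3` the value of `h₊` is `p`; otherwise it is `2p - m / 3` or `2q + m / 3 + 1`,
  -- and the parity of `b - m / 3` tells which of `p`, `q` to solve for.
  by_cases hbk : b ≤ m / 3
  · exact ⟨b, m - 1 - a - b, by omega⟩
  by_cases hpar : (b - m / 3) % 2 = 0
  · exact ⟨(b + m / 3) / 2, m - 1 - a - (b + m / 3) / 2, by omega⟩
  · exact ⟨m - 1 - a - (b - m / 3 - 1) / 2, (b - m / 3 - 1) / 2, by omega⟩

lemma bijOn_bidegree_three {m : ℕ} (hm : ¬ 3 ∣ m) :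
    Set.BijOn (bidegree m 3) (youngBelowDiag m 3)
      {d | d.1 + d.2 ≤ m - 1 ∧ m - 1 ≤ 2 * d.1 + d.2 ∧ m - 1 ≤ d.1 + 2 * d.2} := by
  have hm₀ : 0 < m := Nat.pos_of_ne_zero fun h => hm (h ▸ dvd_zero 3)
  refine ⟨?_, ?_, ?_⟩
  · rintro _ hD
    obtain ⟨p, q, hqp, hp, hq, rfl⟩ := (mem_youngBelowDiag_three_iff hm₀).1 hD
    simp only [Set.mem_ofPred_eq, bidegree_twoRow_three hqp hp hq]
    omega
  · rintro _ hD _ hD' h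
    obtain ⟨p, q, hqp, hp, hq, rfl⟩ := (mem_youngBelowDiag_three_iff hm₀).1 hD
    obtain ⟨p', q', hqp', hp', hq', rfl⟩ := (mem_youngBelowDiag_three_iff hm₀).1 hD'
    rw [bidegree_twoRow_three hqp hp hq, bidegree_twoRow_three hqp' hp' hq', Prod.mk.injEq] at h
    obtain ⟨rfl, rfl⟩ : p = p' ∧ q = q' := by omega
    rfl
  · rintro ⟨a, b⟩ ⟨hab, ha, hb⟩
    obtain ⟨p, q, hqp, hp, hq, rfl, rfl⟩ := exists_rowLengths_of_triangle hm hab ha hb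
    exact ⟨twoRow p q, (mem_youngBelowDiag_three_iff hm₀).2 ⟨p, q, hqp, hp, hq, rfl⟩,
      bidegree_twoRow_three hqp hp hq⟩

theorem symmetry_n_le_three_general (m n : ℕ) (hn3 : n ≤ 3)
    (hmn : Nat.Coprime m n) (a b : ℕ) :
    Nat.card {D : Finset (ℕ × ℕ) | IsYoung D ∧ BelowDiag m n D ∧
        (m - 1) * (n - 1) / 2 - D.card = a ∧ hplus m n D = b} =
      Nat.card {D : Finset (ℕ × ℕ) | IsYoung D ∧ BelowDiag m n D ∧
        (m - 1) * (n - 1) / 2 - D.card = b ∧ hplus m n D = a} := by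
  have hfiber : ∀ a b, {D : Finset (ℕ × ℕ) | IsYoung D ∧ BelowDiag m n D ∧
      (m - 1) * (n - 1) / 2 - D.card = a ∧ hplus m n D = b} =
      {D | D ∈ youngBelowDiag m n ∧ bidegree m n D = (a, b)} := fun a b => by
    ext D
    simp only [youngBelowDiag, bidegree, Set.mem_ofPred_eq, Prod.mk.injEq, and_assoc]
  rw [hfiber, hfiber]
  rcases hn3.lt_or_eq with hn2 | rfl
  · exact card_fiber_eq_of_bijOn (bijOn_bidegree_of_le_two (by omega)) (by simp [add_comm])
  · have hm : ¬ 3 ∣ m := fun h => by simpa using Nat.Coprime.coprime_dvd_left h hmn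
    exact card_fiber_eq_of_bijOn (bijOn_bidegree_three hm)
      (by simp only [Set.mem_ofPred_eq]; omega)

/-- **Full symmetry `c_{m,n}(q,t) = c_{m,n}(t,q)` for `min(m,n) ≤ 3`.** For coprime
positive `m, n` with `n ≤ 3` and every pair `(a, b)`, the number of Young diagrams `D`
below the diagonal of the `m × n` rectangle with `δ - |D| = a` and `h₊(D) = b` equals
the number of those with `δ - |D| = b` and `h₊(D) = a`, where `δ = (m-1)(n-1)/2`. -/
theorem symmetry_n_le_three (m n : ℕ) (hm : 0 < m) (hn : 0 < n) (hn3 : n ≤ 3)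
    (hmn : Nat.Coprime m n) (a b : ℕ) :
    Nat.card {D : Finset (ℕ × ℕ) | IsYoung D ∧ BelowDiag m n D ∧
        (m - 1) * (n - 1) / 2 - D.card = a ∧ hplus m n D = b} =
      Nat.card {D : Finset (ℕ × ℕ) | IsYoung D ∧ BelowDiag m n D ∧
        (m - 1) * (n - 1) / 2 - D.card = b ∧ hplus m n D = a} :=
  symmetry_n_le_three_general m n hn3 hmn a b
end
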